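/- Let (e_1, …, e_n) be an orthonormal family in ℝ^N, let X, Y ∈ span(e_1, …, e_n), and let b_1, …, b_n and c_1, …, c_n be vectors of ℝ^N orthogonal to every e_k, such that ∑_{j=1}^n ⟪Y, e_j⟫·b_j = ∑_{j=1}^n ⟪X, e_j⟫·c_j. Then the element C := ∑_{j=1}^n ι(Y)·ι(e_j)·ι(b_j) − ∑_{j=1}^n ι(X)·ι(e_j)·ι(c_j) of Cl satisfies τ(C) = C. -/
import Mathlib


open scoped RealInnerProductSpace

open CliffordAlgebra

lemma aux_swap {N : ℕ} {Q : QuadraticForm ℝ (EuclideanSpace ℝ (Fin N))}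
    (hQ : ∀ w : EuclideanSpace ℝ (Fin N), Q w = -⟪w, w⟫)
    (u v : EuclideanSpace ℝ (Fin N)) :
    ι Q u * ι Q v + ι Q v * ι Q u = algebraMap ℝ _ (-(2*⟪u,v⟫)) := by
  rw [ι_mul_ι_add_swap]
  congr 1
  have := real_inner_add_add_self u v
  simp only [QuadraticMap.polar, hQ]
  linarith

lemma aux_anticomm {N : ℕ} {Q : QuadraticForm ℝ (EuclideanSpace ℝ (Fin N))}
    (hQ : ∀ w : EuclideanSpace ℝ (Fin N), Q w = -⟪w, w⟫)
    {u v : EuclideanSpace ℝ (Fin N)} (h : ⟪u,v⟫ = 0) :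
    ι Q u * ι Q v = -(ι Q v * ι Q u) := by
  have h2 := aux_swap hQ u v
  rw [h] at h2
  simp only [mul_zero, neg_zero, map_zero] at h2
  exact eq_neg_of_add_eq_zero_left h2

lemma aux_term {N : ℕ} {Q : QuadraticForm ℝ (EuclideanSpace ℝ (Fin N))}
    (hQ : ∀ w : EuclideanSpace ℝ (Fin N), Q w = -⟪w, w⟫)
    {u v w : EuclideanSpace ℝ (Fin N)} (hwv : ⟪w,v⟫ = 0) (hwu : ⟪w,u⟫ = 0) :
    star (ι Q u * ι Q v * ι Q w) = ι Q u * ι Q v * ι Q w + (2*⟪u,v⟫) • ι Q w := by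
  rw [star_mul, star_mul, star_ι, star_ι, star_ι]
  have h1 : ι Q w * ι Q v = -(ι Q v * ι Q w) := aux_anticomm hQ hwv
  have h2 : ι Q w * ι Q u = -(ι Q u * ι Q w) := aux_anticomm hQ hwu
  have h4 : ι Q v * ι Q u = algebraMap ℝ _ (-(2*⟪v,u⟫)) - ι Q u * ι Q v :=
    eq_sub_of_add_eq (aux_swap hQ v u)
  calc -ι Q w * (-ι Q v * -ι Q u)
      = -((ι Q w * ι Q v) * ι Q u) := by noncomm_ring
    _ = (ι Q v * ι Q w) * ι Q u := by rw [h1]; noncomm_ring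
    _ = ι Q v * (ι Q w * ι Q u) := by noncomm_ring
    _ = -((algebraMap ℝ _ (-(2*⟪v,u⟫)) - ι Q u * ι Q v) * ι Q w) := by
          rw [h2, ← h4]; noncomm_ring
    _ = ι Q u * ι Q v * ι Q w + (2*⟪v,u⟫) • ι Q w := by
          rw [sub_mul, map_neg, Algebra.smul_def]; noncomm_ring
    _ = ι Q u * ι Q v * ι Q w + (2*⟪u,v⟫) • ι Q w := by rw [real_inner_comm v u]

lemma aux_orth {N n : ℕ} (e : Fin n → EuclideanSpace ℝ (Fin N))
    (bb : EuclideanSpace ℝ (Fin N)) (hbb : ∀ k, ⟪bb, e k⟫ = 0)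
    {Y : EuclideanSpace ℝ (Fin N)} (hY : Y ∈ Submodule.span ℝ (Set.range e)) :
    ⟪bb, Y⟫ = 0 := by
  induction hY using Submodule.span_induction with
  | mem x hx => obtain ⟨k, rfl⟩ := hx; exact hbb k
  | zero => simp
  | add x y _ _ hx hy => rw [inner_add_right, hx, hy, add_zero]
  | smul r x _ hx => rw [real_inner_smul_right, hx, mul_zero]

/-- Let `Q` be the negative-definite quadratic form on `ℝ^N`, `(e 1, …, e n)` an
orthonormal family, `X, Y` in the span of the `e j`, and `b j`, `c j` vectors orthogonal
to every `e k` with `∑ j, ⟪Y, e j⟫·b j = ∑ j, ⟪X, e j⟫·c j`.  Then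
`C := ∑ j, ι(Y)·ι(e j)·ι(b j) − ∑ j, ι(X)·ι(e j)·ι(c j)` satisfies `τ(C) = C` (with
`τ = star`).  This is the symmetry `τ([C]) = [C]` in the proof that the 1-form `ξ` is
closed. -/
theorem tau_fixed_closedness_element (N n : ℕ) (hN : 1 ≤ N)
    (Q : QuadraticForm ℝ (EuclideanSpace ℝ (Fin N)))
    (hQ : ∀ w : EuclideanSpace ℝ (Fin N), Q w = -⟪w, w⟫)
    (e : Fin n → EuclideanSpace ℝ (Fin N)) (he : Orthonormal ℝ e)
    (X Y : EuclideanSpace ℝ (Fin N))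
    (hX : X ∈ Submodule.span ℝ (Set.range e)) (hY : Y ∈ Submodule.span ℝ (Set.range e))
    (b c : Fin n → EuclideanSpace ℝ (Fin N))
    (hb : ∀ j k : Fin n, ⟪b j, e k⟫ = 0) (hc : ∀ j k : Fin n, ⟪c j, e k⟫ = 0)
    (hsym : ∑ j : Fin n, ⟪Y, e j⟫ • b j = ∑ j : Fin n, ⟪X, e j⟫ • c j) :
    star ((∑ j : Fin n, CliffordAlgebra.ι Q Y * CliffordAlgebra.ι Q (e j) *
            CliffordAlgebra.ι Q (b j)) -
          ∑ j : Fin n, CliffordAlgebra.ι Q X * CliffordAlgebra.ι Q (e j) *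
            CliffordAlgebra.ι Q (c j)) =
      (∑ j : Fin n, CliffordAlgebra.ι Q Y * CliffordAlgebra.ι Q (e j) *
          CliffordAlgebra.ι Q (b j)) -
        ∑ j : Fin n, CliffordAlgebra.ι Q X * CliffordAlgebra.ι Q (e j) *
          CliffordAlgebra.ι Q (c j) := by
  have hterm1 : ∀ j : Fin n, star (ι Q Y * ι Q (e j) * ι Q (b j)) =
      ι Q Y * ι Q (e j) * ι Q (b j) + (2*⟪Y, e j⟫) • ι Q (b j) := fun j =>
    aux_term hQ (hb j j) (aux_orth e (b j) (hb j) hY)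
  have hterm2 : ∀ j : Fin n, star (ι Q X * ι Q (e j) * ι Q (c j)) =
      ι Q X * ι Q (e j) * ι Q (c j) + (2*⟪X, e j⟫) • ι Q (c j) := fun j =>
    aux_term hQ (hc j j) (aux_orth e (c j) (hc j) hX)
  have hA : ∑ j : Fin n, (2*⟪Y, e j⟫) • ι Q (b j) =
      ∑ j : Fin n, (2*⟪X, e j⟫) • ι Q (c j) := by
    simp only [← map_smul, ← map_sum, mul_smul]
    rw [← Finset.smul_sum, ← Finset.smul_sum, hsym]
  rw [star_sub, star_sum, star_sum]
  simp only [hterm1, hterm2, Finset.sum_add_distrib]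
  rw [hA]
  abel
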